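/- If Φ_t maps each point x_i to the vector (λ_1^t φ_1(x_i), …, λ_N^t φ_N(x_i)) where (λ_j, φ_j) are eigenpairs of a diagonalizable matrix P with an orthonormal eigenbasis in a weighted inner product, then the squared Euclidean distance ‖Φ_t(x) − Φ_t(y)‖² equals the diffusion distance ∑_z (P^t(x,z) − P^t(y,z))²/w(z). -/

import Mathlib

/-!
Let `A` be the matrix whose rows are the `φ j` and `W = diagonal w`. Orthonormality reads
`A W Aᵀ = 1`; since `A` is square this forces `Aᵀ A W = 1` (completeness of the eigenbasis, and
`w z ≠ 0` for every `z`). The eigen-relations give `Pᵗ Aᵀ = Aᵀ Λᵗ`, hence the spectral expansion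
`Pᵗ = Aᵀ Λᵗ A W`. So the difference of rows `x` and `y` of `Pᵗ` is `(c A) W` with `c = Φ x - Φ y`,
and its squared norm weighted by `1 / w` is `c (A W Aᵀ) cᵀ = ‖c‖²`.
-/

open Matrix

namespace Matrix

variable {ι R : Type*} [Fintype ι] [DecidableEq ι] [CommRing R]

theorem transpose_mul_mul_diagonal_eq_one {A : Matrix ι ι R} {w : ι → R}
    (h : A * diagonal w * Aᵀ = 1) : Aᵀ * A * diagonal w = 1 := by
  rwa [Matrix.mul_assoc, mul_eq_one_comm]

theorem ne_zero_of_mul_diagonal_mul_transpose_eq_one [Nontrivial R] {A : Matrix ι ι R}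
    {w : ι → R} (h : A * diagonal w * Aᵀ = 1) (z : ι) : w z ≠ 0 := by
  have hz := congrFun₂ (transpose_mul_mul_diagonal_eq_one h) z z
  rw [mul_diagonal, one_apply_eq] at hz
  exact right_ne_zero_of_mul_eq_one hz

theorem sum_vecMul_sq_mul_eq_dotProduct {A : Matrix ι ι R} {w : ι → R}
    (h : A * diagonal w * Aᵀ = 1) (c : ι → R) :
    ∑ z, (c ᵥ* A) z ^ 2 * w z = c ⬝ᵥ c := by
  calc ∑ z, (c ᵥ* A) z ^ 2 * w z = (c ᵥ* A ᵥ* diagonal w) ⬝ᵥ (Aᵀ *ᵥ c) := by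
        simp only [dotProduct, vecMul_diagonal, mulVec_transpose]
        exact Finset.sum_congr rfl fun z _ => by ring
    _ = c ⬝ᵥ c := by
        rw [dotProduct_mulVec, vecMul_vecMul, vecMul_vecMul, ← Matrix.mul_assoc, h, vecMul_one]

theorem pow_mulVec_eq_smul_of_mulVec_eq_smul {M : Matrix ι ι R} {v : ι → R} {μ : R}
    (hv : M *ᵥ v = μ • v) (t : ℕ) : (M ^ t) *ᵥ v = μ ^ t • v := by
  induction t with
  | zero => simp
  | succ t ih => rw [pow_succ, ← mulVec_mulVec, hv, mulVec_smul, ih, smul_smul, ← pow_succ']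

theorem pow_eq_transpose_mul_diagonal_mul_mul_diagonal {P A : Matrix ι ι R} {w lam : ι → R}
    (heig : ∀ j, P *ᵥ A j = lam j • A j) (horth : A * diagonal w * Aᵀ = 1) (t : ℕ) :
    P ^ t = Aᵀ * diagonal (lam ^ t) * A * diagonal w := by
  have hcols : P ^ t * Aᵀ = Aᵀ * diagonal (lam ^ t) := by
    ext u j
    have := congrFun (pow_mulVec_eq_smul_of_mulVec_eq_smul (heig j) t) u
    rw [mul_diagonal, transpose_apply, Pi.pow_apply, mul_comm]
    exact this
  calc P ^ t = P ^ t * (Aᵀ * A * diagonal w) := by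
        rw [transpose_mul_mul_diagonal_eq_one horth, Matrix.mul_one]
    _ = Aᵀ * diagonal (lam ^ t) * A * diagonal w := by
        rw [← hcols, Matrix.mul_assoc, Matrix.mul_assoc, Matrix.mul_assoc]

end Matrix

theorem stmt_15_general {N : ℕ}
    (P : Matrix (Fin N) (Fin N) ℝ)
    (w : Fin N → ℝ)
    (lam : Fin N → ℝ) (φ : Fin N → (Fin N → ℝ))
    (heig : ∀ j, P.mulVec (φ j) = lam j • φ j)
    (horth : ∀ j k, ∑ z, φ j z * φ k z * w z = if j = k then 1 else 0)
    (t : ℕ)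
    (Φ : Fin N → (Fin N → ℝ)) (hΦ : ∀ x j, Φ x j = lam j ^ t * φ j x)
    (x y : Fin N) :
    ∑ j, (Φ x j - Φ y j) ^ 2 = ∑ z, ((P ^ t) x z - (P ^ t) y z) ^ 2 / w z := by
  have hA : of φ * diagonal w * (of φ)ᵀ = 1 := by
    ext j k
    rw [mul_apply, one_apply, ← horth]
    exact Finset.sum_congr rfl fun z _ => by
      rw [mul_diagonal, transpose_apply, of_apply, of_apply]; ring
  set c : Fin N → ℝ := fun j => Φ x j - Φ y j
  have hrow : ∀ z, (P ^ t) x z - (P ^ t) y z = (c ᵥ* of φ) z * w z := by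
    intro z
    rw [pow_eq_transpose_mul_diagonal_mul_mul_diagonal (A := of φ) heig hA t, mul_diagonal,
      mul_diagonal, ← sub_mul, mul_apply, mul_apply, ← Finset.sum_sub_distrib]
    congr 1
    refine Finset.sum_congr rfl fun j _ => ?_
    simp only [mul_diagonal, transpose_apply, of_apply, Pi.pow_apply, c, hΦ]
    ring
  calc ∑ j, (Φ x j - Φ y j) ^ 2 = c ⬝ᵥ c := by simp only [dotProduct, c, sq]
    _ = ∑ z, (c ᵥ* of φ) z ^ 2 * w z := (sum_vecMul_sq_mul_eq_dotProduct hA c).symm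
    _ = ∑ z, ((P ^ t) x z - (P ^ t) y z) ^ 2 / w z := by
        refine Finset.sum_congr rfl fun z _ => ?_
        have hw := ne_zero_of_mul_diagonal_mul_transpose_eq_one hA z
        rw [hrow, mul_pow]
        field_simp

theorem stmt_15 {N : ℕ} (K : Matrix (Fin N) (Fin N) ℝ)
    (hsymm : ∀ x y, K x y = K y x) (hpos : ∀ x y, 0 < K x y)
    (d : Fin N → ℝ) (hd : ∀ x, d x = ∑ z, K x z)
    (P : Matrix (Fin N) (Fin N) ℝ) (hP : ∀ x y, P x y = K x y / d x)
    (w : Fin N → ℝ) (hw : ∀ z, w z = d z / ∑ u, d u)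
    (lam : Fin N → ℝ) (φ : Fin N → (Fin N → ℝ))
    (heig : ∀ j, P.mulVec (φ j) = lam j • φ j)
    (horth : ∀ j k, ∑ z, φ j z * φ k z * w z = if j = k then 1 else 0)
    (t : ℕ) (ht : 1 ≤ t)
    (Φ : Fin N → (Fin N → ℝ)) (hΦ : ∀ x j, Φ x j = lam j ^ t * φ j x)
    (x y : Fin N) :
    ∑ j, (Φ x j - Φ y j) ^ 2 = ∑ z, ((P ^ t) x z - (P ^ t) y z) ^ 2 / w z :=
  stmt_15_general P w lam φ heig horth t Φ hΦ x y
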